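/- arXiv:2212.04746 — 8 statements merged into one kernel-verified Lean document; each statement's English description precedes it below -/
import Mathlib

section
/- Let p ≥ 1, m_1,…,m_p ≥ 1, c ∈ Ω_p, and σ_j > 0 for all j. Then the sum of squared Hamming probabilities has the closed form ∑_{x ∈ Ω_p} p(x | c, σ)² = ∏_{j=1}^p [exp(2/σ_j) + (m_j−1)] / [exp(1/σ_j) + (m_j−1)]². Equivalently, the Gini heterogeneity index of the Hamming distribution is G = 1 − ∏_{j=1}^p [exp(2/σ_j) + (m_j−1)] / [exp(1/σ_j) + (m_j−1)]². -/
/-! The Hamming p.m.f. is the product of the one-dimensional Hamming p.m.f.s of its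
coordinates, so the sum of its squares over `Ω_p` factors into one-dimensional sums; each of
these has only two distinct terms, the one at the center and `m - 1` equal others. -/

/-- The Hamming probability mass function on `Ω_p = Π j, Fin (m j)` with center `c`
and scale `σ`. -/
noncomputable def hammingPMF {p : ℕ} (m : Fin p → ℕ)
    (c x : Π j : Fin p, Fin (m j)) (σ : Fin p → ℝ) : ℝ :=
  (∏ j : Fin p, (1 + ((m j : ℝ) - 1) * Real.exp (-1 / σ j)))⁻¹ *
    Real.exp (-∑ j : Fin p, (1 - if x j = c j then (1 : ℝ) else 0) / σ j)

open Finset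

theorem Fintype.sum_ite_eq_add_card_sub_one_mul {α R : Type*} [Fintype α] [DecidableEq α]
    [CommRing R] (c : α) (a b : R) :
    ∑ y, (if y = c then a else b) = a + ((Fintype.card α : R) - 1) * b := by
  have hsplit : ∀ y, (if y = c then a else b) = b + (if y = c then a - b else 0) := by
    intro y; split_ifs <;> ring
  simp only [hsplit, sum_add_distrib, sum_const, card_univ, nsmul_eq_mul, sum_ite_eq']
  ring

noncomputable def hammingCoordPMF (n : ℕ) (c y : Fin n) (s : ℝ) : ℝ :=
  (1 + ((n : ℝ) - 1) * Real.exp (-1 / s))⁻¹ * if y = c then 1 else Real.exp (-1 / s)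

theorem hammingPMF_eq_prod {p : ℕ} (m : Fin p → ℕ) (c x : Π j : Fin p, Fin (m j))
    (σ : Fin p → ℝ) :
    hammingPMF m c x σ = ∏ j, hammingCoordPMF (m j) (c j) (x j) (σ j) := by
  have hcoord : ∀ j, Real.exp (-((1 - if x j = c j then (1 : ℝ) else 0) / σ j))
      = if x j = c j then 1 else Real.exp (-1 / σ j) := by
    intro j; split_ifs <;> simp [neg_div]
  simp only [hammingPMF, hammingCoordPMF, prod_mul_distrib, prod_inv_distrib,
    ← sum_neg_distrib, Real.exp_sum, hcoord]

theorem sum_hammingCoordPMF_sq (n : ℕ) (c : Fin n) (s : ℝ) :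
    ∑ y, hammingCoordPMF n c y s ^ 2
      = (Real.exp (2 / s) + ((n : ℝ) - 1)) / (Real.exp (1 / s) + ((n : ℝ) - 1)) ^ 2 := by
  set a := Real.exp (1 / s) with ha
  have ha_pos : 0 < a := Real.exp_pos _
  have hn : (0 : ℝ) ≤ (n : ℝ) - 1 := sub_nonneg.mpr (by exact_mod_cast c.pos)
  have hexp_neg : Real.exp (-1 / s) = a⁻¹ := by rw [neg_div, Real.exp_neg]
  have hexp_two : Real.exp (2 / s) = a ^ 2 := by
    rw [ha, ← Real.exp_nat_mul]; ring_nf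
  have hsq : ∀ y, hammingCoordPMF n c y s ^ 2
      = if y = c then (1 + ((n : ℝ) - 1) * a⁻¹)⁻¹ ^ 2
        else (1 + ((n : ℝ) - 1) * a⁻¹)⁻¹ ^ 2 * a⁻¹ ^ 2 := by
    intro y; simp only [hammingCoordPMF, hexp_neg]; split_ifs <;> ring
  simp only [hsq, Fintype.sum_ite_eq_add_card_sub_one_mul, Fintype.card_fin, hexp_two]
  have hden : a + ((n : ℝ) - 1) ≠ 0 := by positivity
  field_simp

theorem hamming_pmf_sum_sq_general
    (p : ℕ) (m : Fin p → ℕ)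
    (c : Π j : Fin p, Fin (m j)) (σ : Fin p → ℝ) :
    ∑ x : Π j : Fin p, Fin (m j), (hammingPMF m c x σ) ^ 2
      = ∏ j : Fin p,
          (Real.exp (2 / σ j) + ((m j : ℝ) - 1)) /
            (Real.exp (1 / σ j) + ((m j : ℝ) - 1)) ^ 2 := by
  simp only [hammingPMF_eq_prod, ← prod_pow]
  rw [← Fintype.prod_sum fun j y => hammingCoordPMF (m j) (c j) y (σ j) ^ 2]
  exact prod_congr rfl fun j _ => sum_hammingCoordPMF_sq (m j) (c j) (σ j)

/-- closed form of the sum of squared Hamming probabilities; equivalently,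
the Gini heterogeneity index is `1` minus this product. -/
theorem hamming_pmf_sum_sq
    (p : ℕ) (hp : 1 ≤ p) (m : Fin p → ℕ) (hm : ∀ j, 1 ≤ m j)
    (c : Π j : Fin p, Fin (m j)) (σ : Fin p → ℝ) (hσ : ∀ j, 0 < σ j) :
    ∑ x : Π j : Fin p, Fin (m j), (hammingPMF m c x σ) ^ 2
      = ∏ j : Fin p,
          (Real.exp (2 / σ j) + ((m j : ℝ) - 1)) /
            (Real.exp (1 / σ j) + ((m j : ℝ) - 1)) ^ 2 :=
  hamming_pmf_sum_sq_general p m c σ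
end

section
/- Let p ≥ 1, m_1,…,m_p ≥ 1, and c ∈ Ω_p. As the common scale parameter tends to zero from above, the Hamming distribution concentrates at its center: for every x ∈ Ω_p, lim_{σ → 0⁺} p(x | c, (σ,…,σ)) equals 1 if x = c and equals 0 if x ≠ c. -/
/-!
With a common scale `σ`, the exponent of the Hamming p.m.f. is `-d(x, c) / σ`, where
`d` is the Hamming distance, and the normalizing constant is a product of factors
`1 + (m_j - 1) e^{-1/σ}`. Since `e^{-k/σ} → 0` as `σ → 0⁺` for every `k > 0`, the normalizing
constant tends to `1`, and the unnormalized weight tends to `1` if `d(x, c) = 0`, i.e. `x = c`,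
and to `0` otherwise.
-/

open Filter Topology Finset

lemma tendsto_exp_neg_div_nhdsGT_zero {k : ℝ} (hk : 0 < k) :
    Tendsto (fun σ : ℝ => Real.exp (-k / σ)) (𝓝[>] 0) (𝓝 0) := by
  have hdiv : Tendsto (fun σ : ℝ => -k / σ) (𝓝[>] 0) atBot := by
    have h := tendsto_neg_atTop_atBot.comp (tendsto_inv_nhdsGT_zero.const_mul_atTop hk)
    refine h.congr fun σ => ?_
    simp [div_eq_mul_inv]
  exact Real.tendsto_exp_atBot.comp hdiv

lemma tendsto_exp_neg_natCast_div_nhdsGT_zero (n : ℕ) :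
    Tendsto (fun σ : ℝ => Real.exp (-(n : ℝ) / σ)) (𝓝[>] 0) (𝓝 (if n = 0 then 1 else 0)) := by
  rcases Nat.eq_zero_or_pos n with rfl | hn
  · simp
  · simpa [hn.ne'] using tendsto_exp_neg_div_nhdsGT_zero (Nat.cast_pos.mpr hn)

lemma tendsto_prod_one_add_mul_exp_neg_inv {ι : Type*} (s : Finset ι) (a : ι → ℝ) :
    Tendsto (fun σ : ℝ => ∏ j ∈ s, (1 + a j * Real.exp (-1 / σ))) (𝓝[>] 0) (𝓝 1) := by
  have hfactor (j : ι) :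
      Tendsto (fun σ : ℝ => 1 + a j * Real.exp (-1 / σ)) (𝓝[>] 0) (𝓝 1) := by
    simpa using tendsto_const_nhds.add
      ((tendsto_exp_neg_div_nhdsGT_zero one_pos).const_mul (a j))
  simpa using tendsto_finsetProd s fun j _ => hfactor j

lemma sum_one_sub_ite_eq_hammingDist {ι : Type*} [Fintype ι] {β : ι → Type*}
    [∀ i, DecidableEq (β i)] (x y : ∀ i, β i) :
    ∑ i, (1 - if x i = y i then (1 : ℝ) else 0) = hammingDist x y := by
  have hterm (i : ι) : (1 - if x i = y i then (1 : ℝ) else 0) = if x i ≠ y i then 1 else 0 := by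
    by_cases h : x i = y i <;> simp [h]
  simp only [hterm, Finset.sum_boole, hammingDist]

lemma hammingPMF_const_scale {p : ℕ} (m : Fin p → ℕ) (c x : Π j : Fin p, Fin (m j)) (σ : ℝ) :
    hammingPMF m c x (fun _ => σ) =
      (∏ j : Fin p, (1 + ((m j : ℝ) - 1) * Real.exp (-1 / σ)))⁻¹ *
        Real.exp (-(hammingDist x c : ℝ) / σ) := by
  rw [hammingPMF, ← Finset.sum_div, sum_one_sub_ite_eq_hammingDist, neg_div, neg_div]

theorem hamming_pmf_tendsto_zero_scale_general
    (p : ℕ) (m : Fin p → ℕ)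
    (c x : Π j : Fin p, Fin (m j)) :
    Filter.Tendsto (fun σ : ℝ => hammingPMF m c x (fun _ => σ))
      (nhdsWithin 0 (Set.Ioi 0))
      (nhds (if x = c then (1 : ℝ) else 0)) := by
  have hnorm := (tendsto_prod_one_add_mul_exp_neg_inv univ fun j => (m j : ℝ) - 1).inv₀ one_ne_zero
  have hweight := tendsto_exp_neg_natCast_div_nhdsGT_zero (hammingDist x c)
  simp only [hammingDist_eq_zero] at hweight
  simpa only [hammingPMF_const_scale, inv_one, one_mul] using hnorm.mul hweight

/-- as the common scale tends to `0⁺`, the Hamming distribution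
concentrates at its center. -/
theorem hamming_pmf_tendsto_zero_scale
    (p : ℕ) (hp : 1 ≤ p) (m : Fin p → ℕ) (hm : ∀ j, 1 ≤ m j)
    (c x : Π j : Fin p, Fin (m j)) :
    Filter.Tendsto (fun σ : ℝ => hammingPMF m c x (fun _ => σ))
      (nhdsWithin 0 (Set.Ioi 0))
      (nhds (if x = c then (1 : ℝ) else 0)) :=
  hamming_pmf_tendsto_zero_scale_general p m c x
end

section
/- Let m ≥ 2 be an integer and v, w > 0 real numbers. The Hypergeometric Inverse Gamma (HIG) kernel h_{v,w}(σ) = (1 + (m−1)·exp(−1/σ))^{−(v+w)} · exp(−(w+1)/σ) · σ^{−2} is integrable on (0,∞), and its integral I(v,w) = ∫_0^∞ h_{v,w}(σ) dσ satisfies 0 < I(v,w) < ∞. Consequently f(σ | v,w) = h_{v,w}(σ)/I(v,w) is a well-defined probability density on (0,∞). -/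
/-!
For `m ≥ 1` the factor `1 + (m - 1) e^{-1/σ}` is at least `1`, so its power with nonpositive
exponent `-(v + w)` is at most `1` and the kernel is squeezed between `0` and
`e^{-(w+1)/σ} / σ²`. The substitution `u = 1/σ` turns the integral of that majorant over
`(0, ∞)` into `∫₀^∞ e^{-(w+1)u} du < ∞`.
-/

open MeasureTheory

/-- The Hypergeometric Inverse Gamma (HIG) kernel on `(0, ∞)` for an attribute with
`m` modalities and parameters `v, w`. -/
noncomputable def higKernel (m : ℕ) (v w : ℝ) (σ : ℝ) : ℝ :=
  (1 + ((m : ℝ) - 1) * Real.exp (-1 / σ)) ^ (-(v + w)) * Real.exp (-(w + 1) / σ) / σ ^ 2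

open Set Real

theorem integrableOn_Ioi_inv_sq_smul_comp_inv_iff {E : Type*} [NormedAddCommGroup E]
    [NormedSpace ℝ E] (f : ℝ → E) :
    IntegrableOn (fun x : ℝ => (x ^ 2)⁻¹ • f x⁻¹) (Ioi 0) ↔ IntegrableOn f (Ioi 0) := by
  rw [← integrableOn_Ioi_comp_rpow_iff' f (p := -1) (by norm_num)]
  refine integrableOn_congr_fun (fun x (hx : 0 < x) => ?_) measurableSet_Ioi
  norm_num [rpow_neg hx.le, rpow_neg_one]

theorem integrableOn_Ioi_exp_neg_div_div_sq {c : ℝ} (hc : 0 < c) :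
    IntegrableOn (fun σ : ℝ => exp (-c / σ) / σ ^ 2) (Ioi 0) := by
  refine ((integrableOn_Ioi_inv_sq_smul_comp_inv_iff _).2
    (exp_neg_integrableOn_Ioi 0 hc)).congr_fun (fun x _ => ?_) measurableSet_Ioi
  simp only [smul_eq_mul, div_eq_mul_inv, mul_comm]

theorem MeasureTheory.setIntegral_pos_of_pos_on {α : Type*} [MeasurableSpace α] {μ : Measure α}
    {s : Set α} {f : α → ℝ} (hs : MeasurableSet s) (hμs : μ s ≠ 0) (hf : IntegrableOn f s μ)
    (hpos : ∀ x ∈ s, 0 < f x) : 0 < ∫ x in s, f x ∂μ := by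
  rw [setIntegral_pos_iff_support_of_nonneg_ae
      (ae_restrict_of_forall_mem hs fun x hx => (hpos x hx).le) hf,
    inter_eq_right.2 fun x hx => Function.mem_support.2 (hpos x hx).ne']
  exact pos_iff_ne_zero.2 hμs

section HIGKernel

variable {m : ℕ} {v w σ : ℝ}

theorem one_le_one_add_sub_one_mul_exp (hm : 1 ≤ m) (x : ℝ) :
    1 ≤ 1 + ((m : ℝ) - 1) * exp x := by
  have hm' : (1 : ℝ) ≤ m := by exact_mod_cast hm
  have := exp_pos x
  nlinarith

theorem higKernel_pos (hm : 1 ≤ m) (hσ : 0 < σ) : 0 < higKernel m v w σ := by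
  have := one_le_one_add_sub_one_mul_exp hm (-1 / σ)
  unfold higKernel
  positivity

theorem higKernel_le_exp_div_sq (hm : 1 ≤ m) (hvw : 0 ≤ v + w) (hσ : 0 < σ) :
    higKernel m v w σ ≤ exp (-(w + 1) / σ) / σ ^ 2 := by
  unfold higKernel
  gcongr
  exact mul_le_of_le_one_left (exp_pos _).le
    (rpow_le_one_of_one_le_of_nonpos (one_le_one_add_sub_one_mul_exp hm _) (by linarith))

theorem continuousOn_higKernel (hm : 1 ≤ m) : ContinuousOn (higKernel m v w) (Ioi 0) := by
  intro σ hσ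
  have hσ0 : σ ≠ 0 := (mem_Ioi.1 hσ).ne'
  have hbase : 1 + ((m : ℝ) - 1) * exp (-1 / σ) ≠ 0 :=
    (one_pos.trans_le (one_le_one_add_sub_one_mul_exp hm _)).ne'
  apply ContinuousAt.continuousWithinAt
  unfold higKernel
  fun_prop (disch := simp [hσ0, hbase])

theorem integrableOn_higKernel (hm : 1 ≤ m) (hvw : 0 ≤ v + w) (hw : -1 < w) :
    IntegrableOn (higKernel m v w) (Ioi 0) :=
  (integrableOn_Ioi_exp_neg_div_div_sq (c := w + 1) (by linarith)).mono'
    ((continuousOn_higKernel hm).aestronglyMeasurable measurableSet_Ioi)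
    (ae_restrict_of_forall_mem measurableSet_Ioi fun _ hσ => by
      rw [norm_of_nonneg (higKernel_pos hm hσ).le]
      exact higKernel_le_exp_div_sq hm hvw hσ)

end HIGKernel

/-- the HIG kernel is integrable on `(0, ∞)` with a strictly positive
(finite) integral, so that its normalization is a well-defined probability density. -/
theorem higKernel_integrable_and_pos
    (m : ℕ) (hm : 2 ≤ m) (v w : ℝ) (hv : 0 < v) (hw : 0 < w) :
    IntegrableOn (higKernel m v w) (Set.Ioi 0) volume ∧
      0 < ∫ σ in Set.Ioi (0 : ℝ), higKernel m v w σ := by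
  have hm1 : 1 ≤ m := by omega
  have hint : IntegrableOn (higKernel m v w) (Ioi 0) :=
    integrableOn_higKernel hm1 (by linarith) (by linarith)
  exact ⟨hint, setIntegral_pos_of_pos_on measurableSet_Ioi (by simp) hint
    fun _ hσ => higKernel_pos hm1 hσ⟩
end

section
/- Let m ≥ 2 be an integer and v, w > 0 real numbers. The normalizing constant of the HIG kernel equals the stated hypergeometric expression: ∫_0^∞ (1 + (m−1)·exp(−1/σ))^{−(v+w)} · exp(−(w+1)/σ) · σ^{−2} dσ = m^{−(v+w)}/(w+1) · ₂F₁(1, v+w; w+2; (m−1)/m), where ₂F₁(a,b;c;z) = ∑_{k=0}^∞ [(a)_k (b)_k / ((c)_k k!)] z^k is the Gauss hypergeometric series and (a)_k denotes the rising factorial a(a+1)⋯(a+k−1). The series converges since 0 ≤ (m−1)/m < 1. -/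
open MeasureTheory

/-- The rising factorial (Pochhammer symbol) `(a)_k = a (a+1) ⋯ (a+k−1)`. -/
noncomputable def risingFactorial (a : ℝ) (k : ℕ) : ℝ :=
  ∏ i ∈ Finset.range k, (a + i)

/-- The Gauss hypergeometric series
`₂F₁(a, b; c; z) = ∑_{k=0}^∞ (a)_k (b)_k / ((c)_k k!) · z^k`. -/
noncomputable def hyp2F1 (a b c z : ℝ) : ℝ :=
  ∑' k : ℕ,
    risingFactorial a k * risingFactorial b k /
      (risingFactorial c k * (Nat.factorial k : ℝ)) * z ^ k

/-!
The substitution `t = exp (-1/σ)` turns the integral into `∫₀¹ (1 + (m-1) t)^(-b) t^w dt` with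
`b = v + w`. Since `1 + (m-1) t = m (1 - z (1-t))` for `z = (m-1)/m`, putting `u = 1 - t` leaves
`m^(-b)` times Euler's integral `∫₀¹ (1 - z u)^(-b) (1-u)^w du`. Expanding `(1 - z u)^(-b)` in its
binomial series `∑ (b)_k / k! (z u)^k` and integrating term by term against the beta integrals
`∫₀¹ u^k (1-u)^w du = k! / ((w+1) (w+2)_k)` produces `₂F₁(1, b; w+2; z) / (w+1)`. All terms are
nonnegative and the beta integrals are bounded by `1/(w+1)`, which justifies the interchange.
-/

open Real Set

lemma risingFactorial_succ (a : ℝ) (k : ℕ) :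
    risingFactorial a (k + 1) = risingFactorial a k * (a + k) :=
  Finset.prod_range_succ _ _

lemma risingFactorial_eq_ascPochhammer_eval (a : ℝ) (k : ℕ) :
    risingFactorial a k = (ascPochhammer ℝ k).eval a := by
  induction k with
  | zero => simp [risingFactorial]
  | succ k ih => rw [risingFactorial_succ, ih, ascPochhammer_succ_eval]

lemma risingFactorial_nonneg {a : ℝ} (ha : 0 ≤ a) (k : ℕ) : 0 ≤ risingFactorial a k :=
  Finset.prod_nonneg fun _ _ => by positivity

lemma risingFactorial_pos {a : ℝ} (ha : 0 < a) (k : ℕ) : 0 < risingFactorial a k :=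
  Finset.prod_pos fun _ _ => by positivity

lemma risingFactorial_one (k : ℕ) : risingFactorial 1 k = k.factorial := by
  rw [risingFactorial_eq_ascPochhammer_eval, ascPochhammer_eval_one]

lemma factorial_le_risingFactorial {a : ℝ} (ha : 1 ≤ a) (k : ℕ) :
    (k.factorial : ℝ) ≤ risingFactorial a k := by
  rw [← risingFactorial_one]
  exact Finset.prod_le_prod (fun _ _ => by positivity) fun _ _ => by linarith

lemma prod_range_succ_add_eq_mul_risingFactorial (a : ℝ) (k : ℕ) :
    ∏ j ∈ Finset.range (k + 1), (a + j) = a * risingFactorial (a + 1) k := by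
  rw [Finset.prod_range_succ', risingFactorial, mul_comm]
  push_cast
  simp only [add_zero, add_assoc, add_comm (1:ℝ)]

lemma Ring.choose_add_sub_one_eq_risingFactorial_div (a : ℝ) (k : ℕ) :
    Ring.choose (a + k - 1) k = risingFactorial a k / k.factorial := by
  rw [Ring.choose_eq_smul, Polynomial.descPochhammer_smeval_eq_ascPochhammer,
    Polynomial.ascPochhammer_smeval_eq_eval, risingFactorial_eq_ascPochhammer_eval, smul_eq_mul,
    div_eq_inv_mul]
  ring_nf

lemma hasSum_risingFactorial_div_factorial_mul_pow (b : ℝ) {x : ℝ} (hx : |x| < 1) :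
    HasSum (fun k : ℕ => risingFactorial b k / k.factorial * x ^ k) ((1 - x) ^ (-b)) := by
  have h := (one_div_one_sub_rpow_hasFPowerSeriesOnBall_zero b).hasSum (y := x)
    (by simpa [Metric.mem_eball, edist_dist] using hx)
  simpa [FormalMultilinearSeries.ofScalars_apply_eq,
    Ring.choose_add_sub_one_eq_risingFactorial_div, mul_comm,
    rpow_neg (by linarith [abs_lt.1 hx] : (0:ℝ) ≤ 1 - x)] using h

lemma intervalIntegrable_pow_mul_one_sub_rpow (k : ℕ) {w : ℝ} (hw : -1 < w) :
    IntervalIntegrable (fun u : ℝ => u ^ k * (1 - u) ^ w) volume 0 1 := by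
  have h := (intervalIntegral.intervalIntegrable_rpow' (a := 1) (b := 0) hw).comp_sub_left 1
  simp only [sub_self, sub_zero] at h
  exact h.continuousOn_mul (continuous_pow k).continuousOn

lemma integral_pow_mul_one_sub_rpow (k : ℕ) {w : ℝ} (hw : -1 < w) :
    ∫ u in (0:ℝ)..1, u ^ k * (1 - u) ^ w
      = k.factorial / ((w + 1) * risingFactorial (w + 2) k) := by
  have hbeta : ((∫ u in (0:ℝ)..1, u ^ k * (1 - u) ^ w : ℝ) : ℂ)
      = Complex.betaIntegral (k + 1) (w + 1) := by
    rw [← intervalIntegral.integral_ofReal, Complex.betaIntegral]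
    refine intervalIntegral.integral_congr fun u hu => ?_
    rw [uIcc_of_le zero_le_one] at hu
    simp only [add_sub_cancel_right, Complex.ofReal_mul, Complex.ofReal_pow,
      Complex.cpow_natCast]
    rw [Complex.ofReal_cpow (by linarith [hu.2]), Complex.ofReal_sub, Complex.ofReal_one]
  rw [Complex.betaIntegral_symm, Complex.betaIntegral_eval_nat_add_one_right
    (by simp; linarith)] at hbeta
  have := prod_range_succ_add_eq_mul_risingFactorial (w + 1) k
  rw [show w + 1 + 1 = w + 2 by ring] at this
  apply Complex.ofReal_injective
  rw [hbeta, ← this]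
  push_cast
  rfl

lemma integral_pow_mul_one_sub_rpow_le (k : ℕ) {w : ℝ} (hw : -1 < w) :
    ∫ u in (0:ℝ)..1, u ^ k * (1 - u) ^ w ≤ (w + 1)⁻¹ := by
  have hw₁ : 0 < w + 1 := by linarith
  have hpos : 0 < (w + 1) * risingFactorial (w + 2) k :=
    mul_pos hw₁ (risingFactorial_pos (by linarith) k)
  rw [integral_pow_mul_one_sub_rpow k hw, div_le_iff₀ hpos, inv_mul_cancel_left₀ hw₁.ne']
  exact factorial_le_risingFactorial (by linarith) k

lemma hasSum_integral_one_sub_mul_rpow_neg_mul_one_sub_rpow {b w z : ℝ} (hb : 0 ≤ b)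
    (hw : -1 < w) (hz₀ : 0 ≤ z) (hz₁ : z < 1) :
    HasSum (fun k : ℕ => risingFactorial b k / k.factorial * z ^ k *
        ∫ u in (0:ℝ)..1, u ^ k * (1 - u) ^ w)
      (∫ u in (0:ℝ)..1, (1 - z * u) ^ (-b) * (1 - u) ^ w) := by
  set c : ℕ → ℝ := fun k => risingFactorial b k / k.factorial * z ^ k
  set G : ℕ → ℝ → ℝ := fun k u => c k * (u ^ k * (1 - u) ^ w)
  have hc_nonneg : ∀ k, 0 ≤ c k := fun k => by have := risingFactorial_nonneg hb k; positivity
  have hG_nonneg : ∀ k, ∀ u ∈ Ioc (0:ℝ) 1, 0 ≤ G k u := fun k u hu => by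
    have : 0 ≤ (1 - u) ^ w := rpow_nonneg (by linarith [hu.2]) w
    have := hc_nonneg k
    have := hu.1.le
    positivity
  have hG_int : ∀ k, Integrable (G k) (volume.restrict (Ioc 0 1)) := fun k =>
    ((intervalIntegrable_iff_integrableOn_Ioc_of_le zero_le_one).1
      (intervalIntegrable_pow_mul_one_sub_rpow k hw)).const_mul (c k)
  have hG_integral : ∀ k, ∫ u in Ioc (0:ℝ) 1, G k u
      = c k * ∫ u in (0:ℝ)..1, u ^ k * (1 - u) ^ w := fun k => by
    rw [integral_const_mul, intervalIntegral.integral_of_le zero_le_one]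
  have hG_sum : Summable fun k => ∫ u in Ioc (0:ℝ) 1, ‖G k u‖ := by
    have hz : |z| < 1 := abs_lt.2 ⟨by linarith, hz₁⟩
    refine ((hasSum_risingFactorial_div_factorial_mul_pow b hz).summable.mul_right (w + 1)⁻¹)
      |>.of_nonneg_of_le (fun k => integral_nonneg fun _ => norm_nonneg _) (fun k => ?_)
    rw [setIntegral_congr_fun measurableSet_Ioc fun u hu => norm_of_nonneg (hG_nonneg k u hu),
      hG_integral]
    exact mul_le_mul_of_nonneg_left (integral_pow_mul_one_sub_rpow_le k hw) (hc_nonneg k)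
  have hG_tsum : ∀ u ∈ Ioc (0:ℝ) 1, ∑' k, G k u = (1 - z * u) ^ (-b) * (1 - u) ^ w := by
    intro u hu
    have hzu : |z * u| < 1 := by
      rw [abs_of_nonneg (by nlinarith [hu.1])]; nlinarith [hu.2]
    rw [← ((hasSum_risingFactorial_div_factorial_mul_pow b hzu).mul_right _).tsum_eq]
    exact tsum_congr fun k => by simp only [G, c]; ring
  have h := hasSum_integral_of_summable_integral_norm hG_int hG_sum
  rwa [setIntegral_congr_fun measurableSet_Ioc hG_tsum, funext hG_integral,
    ← intervalIntegral.integral_of_le zero_le_one] at h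

lemma integral_one_sub_mul_rpow_neg_mul_one_sub_rpow {b w z : ℝ} (hb : 0 ≤ b) (hw : -1 < w)
    (hz₀ : 0 ≤ z) (hz₁ : z < 1) :
    ∫ u in (0:ℝ)..1, (1 - z * u) ^ (-b) * (1 - u) ^ w = hyp2F1 1 b (w + 2) z / (w + 1) := by
  rw [← (hasSum_integral_one_sub_mul_rpow_neg_mul_one_sub_rpow hb hw hz₀ hz₁).tsum_eq, hyp2F1,
    ← tsum_div_const]
  refine tsum_congr fun k => ?_
  have := (risingFactorial_pos (by linarith : (0:ℝ) < w + 2) k).ne'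
  rw [integral_pow_mul_one_sub_rpow k hw, risingFactorial_one]
  field_simp

lemma integral_Ioi_comp_exp_neg_inv (f : ℝ → ℝ) :
    ∫ σ in Ioi (0:ℝ), f (exp (-σ⁻¹)) * exp (-σ⁻¹) / σ ^ 2 = ∫ t in Ioo (0:ℝ) 1, f t := by
  have himage : (fun σ => exp (-σ⁻¹)) '' Ioi 0 = Ioo 0 1 := by
    ext t
    constructor
    · rintro ⟨σ, hσ, rfl⟩
      exact ⟨exp_pos _, exp_lt_one_iff.2 (neg_neg_of_pos (inv_pos.2 hσ))⟩
    · rintro ⟨ht₀, ht₁⟩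
      refine ⟨(-log t)⁻¹, inv_pos.2 (neg_pos.2 (log_neg ht₀ ht₁)), ?_⟩
      simp only [inv_inv, neg_neg, exp_log ht₀]
  have hderiv : ∀ σ ∈ Ioi (0:ℝ),
      HasDerivWithinAt (fun σ => exp (-σ⁻¹)) (exp (-σ⁻¹) / σ ^ 2) (Ioi 0) σ := fun σ hσ =>
    (((hasDerivAt_inv (ne_of_gt hσ)).neg.exp).congr_deriv
      (by simp only [Pi.neg_apply]; ring)).hasDerivWithinAt
  have hinj : InjOn (fun σ => exp (-σ⁻¹)) (Ioi 0) := fun a _ b _ h => by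
    simpa only [exp_eq_exp, neg_inj, inv_inj] using h
  rw [← himage, integral_image_eq_integral_abs_deriv_smul measurableSet_Ioi hderiv hinj]
  refine setIntegral_congr_fun measurableSet_Ioi fun σ (hσ : 0 < σ) => ?_
  rw [abs_of_pos (by positivity), smul_eq_mul]
  ring

lemma integral_higKernel_eq (m : ℕ) (v w : ℝ) :
    ∫ σ in Ioi (0:ℝ), higKernel m v w σ
      = ∫ t in Ioo (0:ℝ) 1, (1 + ((m:ℝ) - 1) * t) ^ (-(v + w)) * t ^ w := by
  rw [← integral_Ioi_comp_exp_neg_inv]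
  refine setIntegral_congr_fun measurableSet_Ioi fun σ _ => ?_
  have : exp (-(w + 1) / σ) = exp (-σ⁻¹) ^ w * exp (-σ⁻¹) := by
    rw [← exp_mul, ← exp_add]; ring_nf
  rw [higKernel, this, neg_div, one_div]
  ring

lemma integral_one_add_sub_one_mul_rpow {c : ℝ} (hc : 0 < c) (b w : ℝ) :
    ∫ t in Ioo (0:ℝ) 1, (1 + (c - 1) * t) ^ (-b) * t ^ w
      = c ^ (-b) * ∫ u in (0:ℝ)..1, (1 - (c - 1) / c * u) ^ (-b) * (1 - u) ^ w := by
  have h := intervalIntegral.integral_comp_sub_left (a := 0) (b := 1)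
    (fun t => (1 - (c - 1) / c * (1 - t)) ^ (-b) * t ^ w) 1
  simp only [sub_sub_cancel, sub_zero, sub_self] at h
  rw [h, ← intervalIntegral.integral_const_mul, intervalIntegral.integral_of_le zero_le_one,
    integral_Ioc_eq_integral_Ioo]
  refine setIntegral_congr_fun measurableSet_Ioo fun t ht => ?_
  have hfactor : 1 + (c - 1) * t = c * (1 - (c - 1) / c * (1 - t)) := by
    field_simp; ring
  have hnonneg : 0 ≤ 1 - (c - 1) / c * (1 - t) := by
    rw [← mul_le_mul_iff_of_pos_left hc, ← hfactor, mul_zero]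
    nlinarith [ht.1, ht.2]
  rw [hfactor, mul_rpow hc.le hnonneg, mul_assoc]

/-- Proposition 2, normalizing constant: the integral of the HIG kernel
equals `m^{−(v+w)}/(w+1) · ₂F₁(1, v+w; w+2; (m−1)/m)`. -/
theorem higKernel_integral_eq_hypergeometric
    (m : ℕ) (hm : 2 ≤ m) (v w : ℝ) (hv : 0 < v) (hw : 0 < w) :
    ∫ σ in Set.Ioi (0 : ℝ), higKernel m v w σ
      = (m : ℝ) ^ (-(v + w)) / (w + 1) *
          hyp2F1 1 (v + w) (w + 2) (((m : ℝ) - 1) / m) := by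
  have hm' : (2 : ℝ) ≤ m := by exact_mod_cast hm
  have hz₀ : 0 ≤ ((m : ℝ) - 1) / m := div_nonneg (by linarith) (by linarith)
  have hz₁ : ((m : ℝ) - 1) / m < 1 := (div_lt_one (by linarith)).2 (by linarith)
  rw [integral_higKernel_eq, integral_one_add_sub_one_mul_rpow (by linarith),
    integral_one_sub_mul_rpow_neg_mul_one_sub_rpow (by linarith) (by linarith) hz₀ hz₁]
  ring
end

section
/- Let m ≥ 2 be an integer, v, w > 0, n ≥ 1, and let y_1,…,y_n ∈ {1,…,m} and c ∈ {1,…,m}. Put s = #{i : y_i = c}. Then for every σ > 0 the HIG prior kernel times the Hamming likelihood of one attribute is exactly the HIG kernel with updated parameters: h_{v,w}(σ) · (1 + (m−1)·exp(−1/σ))^{−n} · exp(−(n−s)/σ) = h_{v+s, w+n−s}(σ). In particular, the HIG family is (semi-)conjugate for the scale parameter of the Hamming distribution, with posterior parameters v* = v + s and w* = w + n − s. -/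
theorem higKernel_mul_rpow_mul_exp (m : ℕ) (hm : 1 ≤ m) (v w a b σ : ℝ) :
    higKernel m v w σ *
        ((1 + ((m : ℝ) - 1) * Real.exp (-1 / σ)) ^ (-(a + b)) * Real.exp (-b / σ))
      = higKernel m (v + a) (w + b) σ := by
  have hbase : 0 < 1 + ((m : ℝ) - 1) * Real.exp (-1 / σ) := by
    have : (0 : ℝ) ≤ m - 1 := sub_nonneg.mpr (by exact_mod_cast hm)
    positivity
  unfold higKernel
  rw [show -(v + a + (w + b)) = -(v + w) + -(a + b) by ring, Real.rpow_add hbase,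
    show -(w + b + 1) / σ = -(w + 1) / σ + -b / σ by ring, Real.exp_add]
  ring

theorem higKernel_conjugacy_general
    (m : ℕ) (hm : 2 ≤ m) (v w : ℝ) (n : ℕ) (s : ℝ) (σ : ℝ) :
    higKernel m v w σ *
        ((1 + ((m : ℝ) - 1) * Real.exp (-1 / σ)) ^ (-(n : ℝ)) *
          Real.exp (-((n : ℝ) - s) / σ))
      = higKernel m (v + s) (w + (n : ℝ) - s) σ := by
  rw [show w + (n : ℝ) - s = w + ((n : ℝ) - s) by ring]
  simpa only [add_sub_cancel] using
    higKernel_mul_rpow_mul_exp m (by omega) v w s ((n : ℝ) - s) σ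

/-- Proposition 2, conjugacy: the HIG prior kernel times the
single-attribute Hamming likelihood is the HIG kernel with updated parameters
`v* = v + s` and `w* = w + n − s`, where `s = #{i : y_i = c}`. -/
theorem higKernel_conjugacy
    (m : ℕ) (hm : 2 ≤ m) (v w : ℝ) (hv : 0 < v) (hw : 0 < w)
    (n : ℕ) (hn : 1 ≤ n) (y : Fin n → Fin m) (c : Fin m)
    (s : ℝ) (hs : s = ((Finset.univ.filter fun i => y i = c).card : ℝ))
    (σ : ℝ) (hσ : 0 < σ) :
    higKernel m v w σ *
        ((1 + ((m : ℝ) - 1) * Real.exp (-1 / σ)) ^ (-(n : ℝ)) *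
          Real.exp (-((n : ℝ) - s) / σ))
      = higKernel m (v + s) (w + (n : ℝ) - s) σ :=
  higKernel_conjugacy_general m hm v w n s σ
end

section
/- Let m ≥ 2 be an integer, v, w > 0, n ≥ 1, y_1,…,y_n ∈ {1,…,m}, c ∈ {1,…,m}, and s = #{i : y_i = c}. Then the single-attribute marginal likelihood under the HIG(v,w) prior has the closed form ∫_0^∞ f(σ | v,w) · (1 + (m−1)·exp(−1/σ))^{−n} · exp(−(n−s)/σ) dσ = I(v+s, w+n−s)/I(v,w), where f(σ | v,w) = h_{v,w}(σ)/I(v,w). -/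
open MeasureTheory

/-- The normalizing constant `I(v, w)` of the HIG kernel. -/
noncomputable def higConst (m : ℕ) (v w : ℝ) : ℝ :=
  ∫ σ in Set.Ioi (0 : ℝ), higKernel m v w σ

-- `n` observations of which `s` equal the center, as a function of the scale `σ`.
noncomputable def hammingLikelihood (m : ℕ) (n s σ : ℝ) : ℝ :=
  (1 + ((m : ℝ) - 1) * Real.exp (-1 / σ)) ^ (-n) * Real.exp (-(n - s) / σ)

lemma one_add_mul_exp_neg_inv_pos (m : ℕ) {σ : ℝ} (hσ : 0 < σ) :
    0 < 1 + ((m : ℝ) - 1) * Real.exp (-1 / σ) := by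
  have hexp_lt_one : Real.exp (-1 / σ) < 1 :=
    Real.exp_lt_one_iff.mpr (div_neg_of_neg_of_pos (by norm_num) hσ)
  nlinarith [Real.exp_pos (-1 / σ), (Nat.cast_nonneg m : (0 : ℝ) ≤ m)]

lemma higKernel_mul_hammingLikelihood (m : ℕ) (v w n s : ℝ) {σ : ℝ} (hσ : 0 < σ) :
    higKernel m v w σ * hammingLikelihood m n s σ = higKernel m (v + s) (w + n - s) σ := by
  have hpow : (1 + ((m : ℝ) - 1) * Real.exp (-1 / σ)) ^ (-(v + w)) *
      (1 + ((m : ℝ) - 1) * Real.exp (-1 / σ)) ^ (-n) =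
      (1 + ((m : ℝ) - 1) * Real.exp (-1 / σ)) ^ (-(v + s + (w + n - s))) := by
    rw [← Real.rpow_add (one_add_mul_exp_neg_inv_pos m hσ)]
    ring_nf
  have hexp : Real.exp (-(w + 1) / σ) * Real.exp (-(n - s) / σ) =
      Real.exp (-(w + n - s + 1) / σ) := by
    rw [← Real.exp_add, ← add_div]
    ring_nf
  simp only [higKernel, hammingLikelihood, ← hpow, ← hexp]
  ring

theorem hig_marginal_likelihood_single_attribute_general
    (m : ℕ) (v w : ℝ) (n : ℕ) (s : ℝ) :
    ∫ σ in Set.Ioi (0 : ℝ),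
        higKernel m v w σ / higConst m v w *
          ((1 + ((m : ℝ) - 1) * Real.exp (-1 / σ)) ^ (-(n : ℝ)) *
            Real.exp (-((n : ℝ) - s) / σ))
      = higConst m (v + s) (w + (n : ℝ) - s) / higConst m v w := by
  calc ∫ σ in Set.Ioi (0 : ℝ), higKernel m v w σ / higConst m v w * hammingLikelihood m n s σ
      = ∫ σ in Set.Ioi (0 : ℝ), higKernel m (v + s) (w + n - s) σ / higConst m v w := by
        refine setIntegral_congr_fun measurableSet_Ioi fun σ hσ => ?_
        rw [div_mul_eq_mul_div, higKernel_mul_hammingLikelihood m v w n s hσ]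
    _ = higConst m (v + s) (w + n - s) / higConst m v w := integral_div _ _

/-- the single-attribute marginal likelihood under the `HIG(v, w)` prior
is the ratio `I(v+s, w+n−s) / I(v, w)`, where `s = #{i : y_i = c}`. -/
theorem hig_marginal_likelihood_single_attribute
    (m : ℕ) (hm : 2 ≤ m) (v w : ℝ) (hv : 0 < v) (hw : 0 < w)
    (n : ℕ) (hn : 1 ≤ n) (y : Fin n → Fin m) (c : Fin m)
    (s : ℝ) (hs : s = ((Finset.univ.filter fun i => y i = c).card : ℝ)) :
    ∫ σ in Set.Ioi (0 : ℝ),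
        higKernel m v w σ / higConst m v w *
          ((1 + ((m : ℝ) - 1) * Real.exp (-1 / σ)) ^ (-(n : ℝ)) *
            Real.exp (-((n : ℝ) - s) / σ))
      = higConst m (v + s) (w + (n : ℝ) - s) / higConst m v w :=
  hig_marginal_likelihood_single_attribute_general m v w n s
end

section
/- Let m ≥ 2 be an integer and v, w > 0. A random variable with the HIG(v,w) distribution has no finite expectation: ∫_0^∞ σ · h_{v,w}(σ) dσ = ∞; equivalently, the function σ ↦ σ · h_{v,w}(σ) is not Lebesgue integrable on (0,∞). -/
/-!
Since `exp (-1/σ) → 1` as `σ → ∞`, the kernel behaves like `m ^ (-(v + w)) / σ ^ 2` at infinity,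
so `σ · h_{v,w}(σ)` is bounded below by a positive multiple of `1 / σ` on some `(b, ∞)`,
whose integral diverges logarithmically.
-/

open MeasureTheory Set Filter Topology

theorem setLIntegral_Ioi_ofReal_const_mul_inv_eq_top {c b : ℝ} (hc : 0 < c) (hb : 0 ≤ b) :
    ∫⁻ x in Ioi b, ENNReal.ofReal (c * x⁻¹) = ⊤ := by
  by_contra hfin
  have hnonneg : 0 ≤ᵐ[volume.restrict (Ioi b)] fun x : ℝ => c * x⁻¹ := by
    filter_upwards [ae_restrict_mem measurableSet_Ioi] with x hx
    exact mul_nonneg hc.le (inv_nonneg.2 (hb.trans (le_of_lt hx)))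
  have hint : IntegrableOn (fun x : ℝ => c * x⁻¹) (Ioi b) :=
    (lintegral_ofReal_ne_top_iff_integrable
      (measurable_const.mul measurable_inv).aestronglyMeasurable hnonneg).1 hfin
  exact not_integrableOn_Ioi_inv ((integrable_const_mul_iff hc.ne'.isUnit _).1 hint)

theorem setLIntegral_Ioi_ofReal_eq_top_of_tendsto_mul {g : ℝ → ℝ} {L : ℝ} (hL : 0 < L)
    (hg : Tendsto (fun x => x * g x) atTop (𝓝 L)) (a : ℝ) :
    ∫⁻ x in Ioi a, ENNReal.ofReal (g x) = ⊤ := by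
  obtain ⟨b, hb⟩ := eventually_atTop.1 (hg.eventually (eventually_ge_nhds (half_lt_self hL)))
  set b' := max b (max a 0)
  have hbb' : b ≤ b' := le_max_left _ _
  have hab' : a ≤ b' := le_max_of_le_right (le_max_left _ _)
  have hb'0 : 0 ≤ b' := le_max_of_le_right (le_max_right _ _)
  have hbound : ∀ x ∈ Ioi b', ENNReal.ofReal (L / 2 * x⁻¹) ≤ ENNReal.ofReal (g x) := by
    intro x hx
    refine ENNReal.ofReal_le_ofReal ?_
    rw [← div_eq_mul_inv, div_le_iff₀ (hb'0.trans_lt hx), mul_comm]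
    exact hb x (hbb'.trans (le_of_lt hx))
  refine top_unique ?_
  calc ⊤ = ∫⁻ x in Ioi b', ENNReal.ofReal (L / 2 * x⁻¹) :=
        (setLIntegral_Ioi_ofReal_const_mul_inv_eq_top (half_pos hL) hb'0).symm
    _ ≤ ∫⁻ x in Ioi b', ENNReal.ofReal (g x) := setLIntegral_mono' measurableSet_Ioi hbound
    _ ≤ ∫⁻ x in Ioi a, ENNReal.ofReal (g x) := lintegral_mono_set (Ioi_subset_Ioi hab')

theorem tendsto_sq_mul_higKernel_atTop {m : ℕ} (hm : 0 < m) (v w : ℝ) :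
    Tendsto (fun σ => σ ^ 2 * higKernel m v w σ) atTop (𝓝 ((m : ℝ) ^ (-(v + w)))) := by
  have hexp : ∀ c : ℝ, Tendsto (fun σ : ℝ => Real.exp (c / σ)) atTop (𝓝 1) := fun _ =>
    Real.tendsto_exp_nhds_zero_nhds_one.comp (tendsto_const_nhds.div_atTop tendsto_id)
  have hbase : Tendsto (fun σ : ℝ => 1 + ((m : ℝ) - 1) * Real.exp (-1 / σ)) atTop (𝓝 m) := by
    convert tendsto_const_nhds.add ((hexp (-1)).const_mul ((m : ℝ) - 1)) using 2
    ring
  have hlim := (hbase.rpow_const (p := -(v + w)) (Or.inl (by positivity))).mul (hexp (-(w + 1)))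
  rw [mul_one] at hlim
  refine hlim.congr' ?_
  filter_upwards [eventually_ne_atTop 0] with σ hσ
  simp only [higKernel]
  field_simp

theorem hig_no_finite_expectation_general
    (m : ℕ) (hm : 2 ≤ m) (v w : ℝ) :
    (∫⁻ σ in Set.Ioi (0 : ℝ), ENNReal.ofReal (σ * higKernel m v w σ)) = ⊤ ∧
      ¬ IntegrableOn (fun σ : ℝ => σ * higKernel m v w σ) (Set.Ioi 0) volume := by
  have hlim : Tendsto (fun σ => σ * (σ * higKernel m v w σ)) atTop
      (𝓝 ((m : ℝ) ^ (-(v + w)))) := by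
    simpa only [← mul_assoc, ← sq] using tendsto_sq_mul_higKernel_atTop (by omega) v w
  have htop := setLIntegral_Ioi_ofReal_eq_top_of_tendsto_mul (by positivity) hlim 0
  exact ⟨htop, fun hint => hint.lintegral_lt_top.ne htop⟩

/-- a `HIG(v, w)` random variable has no finite expectation:
`∫_0^∞ σ · h_{v,w}(σ) dσ = ∞`, equivalently `σ ↦ σ · h_{v,w}(σ)` is not integrable. -/
theorem hig_no_finite_expectation
    (m : ℕ) (hm : 2 ≤ m) (v w : ℝ) (hv : 0 < v) (hw : 0 < w) :
    (∫⁻ σ in Set.Ioi (0 : ℝ), ENNReal.ofReal (σ * higKernel m v w σ)) = ⊤ ∧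
      ¬ IntegrableOn (fun σ : ℝ => σ * higKernel m v w σ) (Set.Ioi 0) volume :=
  hig_no_finite_expectation_general m hm v w
end

section
/- Let m ≥ 2 be an integer and v, w > 0. Under the change of variables ε = (m−1)·exp(−1/σ)/(1 + (m−1)·exp(−1/σ)), the HIG kernel transforms into a truncated Beta kernel on (0, (m−1)/m): for every Borel set B ⊆ (0, (m−1)/m), ∫_{{σ > 0 : ε(σ) ∈ B}} h_{v,w}(σ) dσ = (m−1)^{−(w+1)} ∫_B ε^w · (1−ε)^{v−2} dε. In particular, the pushforward of the HIG(v,w) distribution under σ ↦ ε(σ) has density proportional to ε^w(1−ε)^{v−2} on (0,(m−1)/m), i.e., it is a Beta distribution truncated to (0,(m−1)/m). -/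
open MeasureTheory

/-!
Write `c = m - 1`. The map `σ ↦ ε` is inverted explicitly by `σ = 1 / log (c (1 - ε) / ε)`,
which maps `(0, c / (c + 1))` bijectively onto `(0, ∞)` with derivative
`1 / (ε (1 - ε) log² (c (1 - ε) / ε))`. Along this inverse `exp (-1 / σ) = ε / (c (1 - ε))`
and `1 + c exp (-1 / σ) = 1 / (1 - ε)`, so the one-dimensional change of variables formula
turns kernel times Jacobian into `c ^ (-(w + 1)) ε ^ w (1 - ε) ^ (v - 2)`.
-/

open Real Set

noncomputable def epsilonOfSigma (c σ : ℝ) : ℝ :=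
  c * exp (-1 / σ) / (1 + c * exp (-1 / σ))

noncomputable def sigmaOfEpsilon (c ε : ℝ) : ℝ :=
  (log (c * (1 - ε) / ε))⁻¹

noncomputable def derivSigmaOfEpsilon (c ε : ℝ) : ℝ :=
  (ε * (1 - ε) * log (c * (1 - ε) / ε) ^ 2)⁻¹

section ChangeOfVariables

variable {c ε : ℝ}

lemma Ioo_div_add_one_subset_Ioo (hc : 0 < c) : Ioo 0 (c / (c + 1)) ⊆ Ioo 0 1 :=
  Ioo_subset_Ioo_right <| (div_lt_one (by linarith : 0 < c + 1)).2 (lt_add_one c) |>.le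

lemma one_lt_mul_one_sub_div (hc : 0 < c) (hε : ε ∈ Ioo 0 (c / (c + 1))) :
    1 < c * (1 - ε) / ε := by
  obtain ⟨hε0, hεc⟩ := hε
  rw [lt_div_iff₀ hε0]
  have := (lt_div_iff₀ (by linarith : 0 < c + 1)).1 hεc
  linarith

lemma sigmaOfEpsilon_pos (hc : 0 < c) (hε : ε ∈ Ioo 0 (c / (c + 1))) :
    0 < sigmaOfEpsilon c ε :=
  inv_pos.2 (log_pos (one_lt_mul_one_sub_div hc hε))

lemma exp_neg_one_div_sigmaOfEpsilon (hc : 0 < c) (hε : ε ∈ Ioo 0 1) :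
    exp (-1 / sigmaOfEpsilon c ε) = ε / (c * (1 - ε)) := by
  have hratio : 0 < c * (1 - ε) / ε := div_pos (mul_pos hc (sub_pos.2 hε.2)) hε.1
  rw [sigmaOfEpsilon, div_inv_eq_mul, neg_one_mul, exp_neg, exp_log hratio, inv_div]

lemma epsilonOfSigma_sigmaOfEpsilon (hc : 0 < c) (hε : ε ∈ Ioo 0 1) :
    epsilonOfSigma c (sigmaOfEpsilon c ε) = ε := by
  have : 1 - ε ≠ 0 := (sub_pos.2 hε.2).ne'
  rw [epsilonOfSigma, exp_neg_one_div_sigmaOfEpsilon hc hε]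
  field_simp
  ring

lemma sigmaOfEpsilon_epsilonOfSigma (hc : 0 < c) (σ : ℝ) :
    sigmaOfEpsilon c (epsilonOfSigma c σ) = σ := by
  have hodds : c * (1 - epsilonOfSigma c σ) / epsilonOfSigma c σ = exp (1 / σ) := by
    rw [epsilonOfSigma, neg_div, exp_neg]
    have : 0 < 1 + c * (exp (1 / σ))⁻¹ := by positivity
    field_simp
    ring
  rw [sigmaOfEpsilon, hodds, log_exp, one_div, inv_inv]

lemma image_sigmaOfEpsilon (hc : 0 < c) {B : Set ℝ} (hB : B ⊆ Ioo 0 (c / (c + 1))) :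
    sigmaOfEpsilon c '' B = {σ | 0 < σ ∧ epsilonOfSigma c σ ∈ B} := by
  ext σ
  constructor
  · rintro ⟨ε, hεB, rfl⟩
    refine ⟨sigmaOfEpsilon_pos hc (hB hεB), ?_⟩
    rwa [epsilonOfSigma_sigmaOfEpsilon hc (Ioo_div_add_one_subset_Ioo hc (hB hεB))]
  · rintro ⟨hσ, hεB⟩
    exact ⟨_, hεB, sigmaOfEpsilon_epsilonOfSigma hc σ⟩

lemma injOn_sigmaOfEpsilon (hc : 0 < c) : InjOn (sigmaOfEpsilon c) (Ioo 0 1) :=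
  LeftInvOn.injOn fun _ hε ↦ epsilonOfSigma_sigmaOfEpsilon hc hε

lemma hasDerivAt_log_mul_one_sub_div (hc : c ≠ 0) (hε : ε ∈ Ioo 0 1) :
    HasDerivAt (fun x ↦ log (c * (1 - x) / x)) (-(ε * (1 - ε))⁻¹) ε := by
  obtain ⟨hε0, hε1⟩ := hε
  have hratio :
      HasDerivAt (fun x ↦ c * (1 - x) / x) ((c * -1 * ε - c * (1 - ε) * 1) / ε ^ 2) ε :=
    (((hasDerivAt_id ε).const_sub 1).const_mul c).div (hasDerivAt_id ε) hε0.ne'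
  convert hratio.log (div_ne_zero (mul_ne_zero hc (sub_pos.2 hε1).ne') hε0.ne') using 1
  have : 1 - ε ≠ 0 := (sub_pos.2 hε1).ne'
  field_simp
  ring

lemma hasDerivAt_sigmaOfEpsilon (hc : 0 < c) (hε : ε ∈ Ioo 0 (c / (c + 1))) :
    HasDerivAt (sigmaOfEpsilon c) (derivSigmaOfEpsilon c ε) ε := by
  have hlog : 0 < log (c * (1 - ε) / ε) := log_pos (one_lt_mul_one_sub_div hc hε)
  have h :=
    (hasDerivAt_log_mul_one_sub_div hc.ne' (Ioo_div_add_one_subset_Ioo hc hε)).inv hlog.ne'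
  rwa [neg_neg, div_eq_mul_inv, ← mul_inv] at h

end ChangeOfVariables

lemma higKernel_eq (m : ℕ) (v w σ : ℝ) :
    higKernel m v w σ =
      (1 + ((m : ℝ) - 1) * exp (-1 / σ)) ^ (-(v + w)) * exp (-1 / σ) ^ (w + 1) / σ ^ 2 := by
  rw [higKernel, ← exp_mul]
  ring_nf

lemma abs_derivSigmaOfEpsilon_mul_higKernel {m : ℕ} (hm : 1 < m) (v w : ℝ) {ε : ℝ}
    (hε : ε ∈ Ioo 0 (((m : ℝ) - 1) / m)) :
    |derivSigmaOfEpsilon ((m : ℝ) - 1) ε| * higKernel m v w (sigmaOfEpsilon ((m : ℝ) - 1) ε) =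
      ((m : ℝ) - 1) ^ (-(w + 1)) * (ε ^ w * (1 - ε) ^ (v - 2)) := by
  set c : ℝ := (m : ℝ) - 1
  have hc : 0 < c := sub_pos.2 (by exact_mod_cast hm)
  have hεc : ε ∈ Ioo 0 (c / (c + 1)) := by rwa [sub_add_cancel]
  obtain ⟨hε0, hε1⟩ := Ioo_div_add_one_subset_Ioo hc hεc
  have h1ε : 0 < 1 - ε := sub_pos.2 hε1
  have hlog : 0 < log (c * (1 - ε) / ε) := log_pos (one_lt_mul_one_sub_div hc hεc)
  rw [derivSigmaOfEpsilon, abs_of_pos (by positivity)]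
  set L := log (c * (1 - ε) / ε)
  have hbase : 1 + c * (ε / (c * (1 - ε))) = (1 - ε)⁻¹ := by
    field_simp
    ring
  have hpow_base :
      (1 - ε)⁻¹ ^ (-(v + w)) = (1 - ε) ^ (v - 2) * (1 - ε) ^ (w + 1) * (1 - ε) := by
    rw [inv_rpow h1ε.le, rpow_neg h1ε.le, inv_inv, ← rpow_add h1ε, ← rpow_add_one h1ε.ne']
    ring_nf
  have hpow_exp :
      (ε / (c * (1 - ε))) ^ (w + 1) = ε ^ w * ε / (c ^ (w + 1) * (1 - ε) ^ (w + 1)) := by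
    rw [div_rpow hε0.le (by positivity), mul_rpow hc.le h1ε.le, rpow_add_one hε0.ne']
  have hsq : sigmaOfEpsilon c ε ^ 2 = (L ^ 2)⁻¹ := inv_pow _ _
  rw [higKernel_eq, exp_neg_one_div_sigmaOfEpsilon hc ⟨hε0, hε1⟩, hbase, hpow_base, hpow_exp,
    hsq, rpow_neg hc.le]
  have : L ≠ 0 := hlog.ne'
  have : 0 < c ^ (w + 1) := by positivity
  have : 0 < (1 - ε) ^ (w + 1) := by positivity
  field_simp

theorem higKernel_change_of_variables_epsilon_general
    (m : ℕ) (hm : 2 ≤ m) (v w : ℝ) :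
    ∀ B : Set ℝ, MeasurableSet B → B ⊆ Set.Ioo 0 (((m : ℝ) - 1) / m) →
      ∫ σ in {σ : ℝ | 0 < σ ∧
          ((m : ℝ) - 1) * Real.exp (-1 / σ) / (1 + ((m : ℝ) - 1) * Real.exp (-1 / σ)) ∈ B},
        higKernel m v w σ
      = ((m : ℝ) - 1) ^ (-(w + 1)) * ∫ ε in B, ε ^ w * (1 - ε) ^ (v - 2) := by
  intro B hB hBm
  set c : ℝ := (m : ℝ) - 1
  have hc : 0 < c := sub_pos.2 (by exact_mod_cast hm)
  have hBc : B ⊆ Ioo 0 (c / (c + 1)) := by rwa [sub_add_cancel]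
  have hderiv (ε : ℝ) (hε : ε ∈ B) :=
    (hasDerivAt_sigmaOfEpsilon hc (hBc hε)).hasDerivWithinAt (s := B)
  calc _ = ∫ σ in sigmaOfEpsilon c '' B, higKernel m v w σ := by
        rw [image_sigmaOfEpsilon hc hBc]
        rfl
    _ = ∫ ε in B, |derivSigmaOfEpsilon c ε| • higKernel m v w (sigmaOfEpsilon c ε) :=
        integral_image_eq_integral_abs_deriv_smul hB hderiv
          ((injOn_sigmaOfEpsilon hc).mono fun _ hε ↦ Ioo_div_add_one_subset_Ioo hc (hBc hε)) _
    _ = _ := by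
      rw [← integral_const_mul]
      exact setIntegral_congr_fun hB fun ε hε ↦
        abs_derivSigmaOfEpsilon_mul_higKernel hm v w (hBm hε)

/-- under the change of variables
`ε = (m−1)exp(−1/σ)/(1+(m−1)exp(−1/σ))`, the HIG kernel transforms into a truncated
Beta kernel `ε^w (1−ε)^{v−2}` on `(0, (m−1)/m)`, up to the factor `(m−1)^{−(w+1)}`. -/
theorem higKernel_change_of_variables_epsilon
    (m : ℕ) (hm : 2 ≤ m) (v w : ℝ) (hv : 0 < v) (hw : 0 < w) :
    ∀ B : Set ℝ, MeasurableSet B → B ⊆ Set.Ioo 0 (((m : ℝ) - 1) / m) →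
      ∫ σ in {σ : ℝ | 0 < σ ∧
          ((m : ℝ) - 1) * Real.exp (-1 / σ) / (1 + ((m : ℝ) - 1) * Real.exp (-1 / σ)) ∈ B},
        higKernel m v w σ
      = ((m : ℝ) - 1) ^ (-(w + 1)) * ∫ ε in B, ε ^ w * (1 - ε) ^ (v - 2) :=
  higKernel_change_of_variables_epsilon_general m hm v w
end
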